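/- arXiv:1905.01918 — 6 statements merged into one kernel-verified Lean document; each statement's English description precedes it below -/
import Mathlib

section
/- Let N be a positive integer, let A, A_k, Â_k ∈ ℝ^{N×N} be matrices, let b, x_k ∈ ℝ^N, and set W_k := A_k − Â_k. Assume the saturation condition ‖Â_k x_k − A x_k‖₂ ≤ c_sat ‖A_k x_k − A x_k‖₂ with a constant 0 < c_sat < 1, and assume ‖b − A_k x_k‖₂ ≤ α ‖W_k x_k‖₂ for some constant α ≥ 0. Then ‖b − A x_k‖₂ ≤ (1 + α(1 + c_sat))/(1 − c_sat) · ‖W_k x_k‖₂. -/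
/-! The triangle inequality through `Â_k x_k` together with saturation gives
`(1 - c_sat) ‖A_k x_k - A x_k‖ ≤ ‖W_k x_k‖`; a second triangle inequality through `A_k x_k`
then adds the residual bound `α ‖W_k x_k‖`. Everything happens in an arbitrary normed group. -/

noncomputable def enorm {N : ℕ} (v : Fin N → ℝ) : ℝ :=
  Real.sqrt (∑ i, v i ^ 2)

lemma enorm_eq_norm_toLp {N : ℕ} (v : Fin N → ℝ) : _root_.enorm v = ‖WithLp.toLp 2 v‖ := by
  simp [_root_.enorm, EuclideanSpace.norm_eq]

section Saturation

variable {E : Type*} [SeminormedAddCommGroup E]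

lemma norm_sub_le_norm_sub_div_of_saturation {u v w : E} {c : ℝ} (hc : c < 1)
    (hsat : ‖v - w‖ ≤ c * ‖u - w‖) : ‖u - w‖ ≤ ‖u - v‖ / (1 - c) := by
  rw [le_div_iff₀ (sub_pos.mpr hc)]
  linarith [norm_sub_le_norm_sub_add_norm_sub u v w]

lemma norm_sub_le_of_saturation {b u v w : E} {c α : ℝ} (hc0 : 0 ≤ c) (hc1 : c < 1)
    (hα : 0 ≤ α) (hsat : ‖v - w‖ ≤ c * ‖u - w‖) (hres : ‖b - u‖ ≤ α * ‖u - v‖) :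
    ‖b - w‖ ≤ (1 + α * (1 + c)) / (1 - c) * ‖u - v‖ := by
  have hden : 0 < 1 - c := sub_pos.mpr hc1
  have hα' : α ≤ α * (1 + c) / (1 - c) := by
    rw [le_div_iff₀ hden]
    nlinarith
  calc ‖b - w‖ ≤ ‖b - u‖ + ‖u - w‖ := norm_sub_le_norm_sub_add_norm_sub b u w
    _ ≤ α * ‖u - v‖ + ‖u - v‖ / (1 - c) :=
      add_le_add hres (norm_sub_le_norm_sub_div_of_saturation hc1 hsat)
    _ ≤ α * (1 + c) / (1 - c) * ‖u - v‖ + ‖u - v‖ / (1 - c) := by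
      gcongr
    _ = (1 + α * (1 + c)) / (1 - c) * ‖u - v‖ := by ring

end Saturation

theorem reliability_first_inequality_general
    (N : ℕ)
    (A Ak Ahk : Matrix (Fin N) (Fin N) ℝ) (b xk : Fin N → ℝ)
    (Wk : Matrix (Fin N) (Fin N) ℝ) (hW : Wk = Ak - Ahk)
    (csat α : ℝ) (hc0 : 0 < csat) (hc1 : csat < 1) (hα : 0 ≤ α)
    (hsat : _root_.enorm (Ahk.mulVec xk - A.mulVec xk) ≤ csat * _root_.enorm (Ak.mulVec xk - A.mulVec xk))
    (hres : _root_.enorm (b - Ak.mulVec xk) ≤ α * _root_.enorm (Wk.mulVec xk)) :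
    _root_.enorm (b - A.mulVec xk) ≤
      (1 + α * (1 + csat)) / (1 - csat) * _root_.enorm (Wk.mulVec xk) := by
  rw [hW, Matrix.sub_mulVec] at hres ⊢
  simp only [enorm_eq_norm_toLp, WithLp.toLp_sub] at hsat hres ⊢
  exact norm_sub_le_of_saturation hc0.le hc1 hα hsat hres

/-- Lemma 1 (reliability, first inequality): under the saturation condition and the
assumption that the residual of the approximate system is controlled by `α‖W_k x_k‖₂`,
the true residual is bounded by `(1 + α(1 + c_sat))/(1 − c_sat) · ‖W_k x_k‖₂`. -/
theorem reliability_first_inequality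
    (N : ℕ) (hN : 0 < N)
    (A Ak Ahk : Matrix (Fin N) (Fin N) ℝ) (b xk : Fin N → ℝ)
    (Wk : Matrix (Fin N) (Fin N) ℝ) (hW : Wk = Ak - Ahk)
    (csat α : ℝ) (hc0 : 0 < csat) (hc1 : csat < 1) (hα : 0 ≤ α)
    (hsat : _root_.enorm (Ahk.mulVec xk - A.mulVec xk) ≤ csat * _root_.enorm (Ak.mulVec xk - A.mulVec xk))
    (hres : _root_.enorm (b - Ak.mulVec xk) ≤ α * _root_.enorm (Wk.mulVec xk)) :
    _root_.enorm (b - A.mulVec xk) ≤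
      (1 + α * (1 + csat)) / (1 - csat) * _root_.enorm (Wk.mulVec xk) :=
  reliability_first_inequality_general N A Ak Ahk b xk Wk hW csat α hc0 hc1 hα hsat hres
end

section
/- Let N be a positive integer, let W ∈ ℝ^{N×N}, and let P be a finite set of blocks (t,s) with t, s ⊆ {1,…,N} such that: (i) the product index sets t×s, (t,s) ∈ P, are pairwise disjoint; (ii) for any two distinct blocks of P, their row clusters t are either equal or disjoint; (iii) for every subset t ⊆ {1,…,N}, at most c_sp blocks of P have row cluster t, where c_sp is a positive integer; and (iv) W_{ij} = 0 whenever the pair (i,j) is not contained in t×s for any (t,s) ∈ P. Then for every x ∈ ℝ^N it holds that ‖Wx‖₂² ≤ c_sp · Σ_{(t,s)∈P} ‖W_{ts} x_s‖₂². -/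
/-!
Row by row: the entries of row `i` of `W` live in the blocks whose row cluster contains `i`,
and the column clusters of those blocks are pairwise disjoint, so `(W x)_i` splits as a sum of
the block contributions `(W_{ts} x_s)_i`. All these blocks share the row cluster of any one of
them, so there are at most `c_sp` of them, and Cauchy–Schwarz gives
`(W x)_i² ≤ c_sp · Σ_b (W_{ts} x_s)_i²`. Summing over `i` regroups the right-hand side by blocks.
-/

open Finset

/-- The Euclidean norm on `ℝ^N`. -/
noncomputable def enorm' {N : ℕ} (v : Fin N → ℝ) : ℝ :=
  Real.sqrt (∑ i, v i ^ 2)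

/-- `‖M_{ts} x_s‖₂² = Σ_{i∈t} (Σ_{j∈s} M_{ij} x_j)²`. -/
def blockNormSq {N : ℕ} (M : Matrix (Fin N) (Fin N) ℝ)
    (t s : Finset (Fin N)) (x : Fin N → ℝ) : ℝ :=
  ∑ i ∈ t, (∑ j ∈ s, M i j * x j) ^ 2

section BlockPartition

variable {ι κ : Type*} [DecidableEq ι] {P : Finset (Finset ι × Finset κ)}

lemma card_filter_mem_fst_le {c : ℕ} (hrows : ∀ b ∈ P, ∀ b' ∈ P, b.1 = b'.1 ∨ Disjoint b.1 b'.1)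
    (hsparse : ∀ t : Finset ι, #(P.filter (fun b => b.1 = t)) ≤ c) (i : ι) :
    #(P.filter (fun b => i ∈ b.1)) ≤ c := by
  rcases (P.filter (fun b => i ∈ b.1)).eq_empty_or_nonempty with hempty | ⟨b₀, hb₀⟩
  · simp [hempty]
  rw [mem_filter] at hb₀
  refine (card_le_card fun b hb => ?_).trans (hsparse b₀.1)
  rw [mem_filter] at hb ⊢
  refine ⟨hb.1, (hrows b hb.1 b₀ hb₀.1).resolve_right fun hdisj => ?_⟩
  exact disjoint_left.mp hdisj hb.2 hb₀.2

lemma pairwiseDisjoint_snd_filter_mem_fst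
    (hdisj : ∀ b ∈ P, ∀ b' ∈ P, b ≠ b' → Disjoint (b.1 ×ˢ b.2) (b'.1 ×ˢ b'.2)) (i : ι) :
    (P.filter (fun b => i ∈ b.1) : Set (Finset ι × Finset κ)).PairwiseDisjoint Prod.snd := by
  intro b hb b' hb' hne
  simp only [coe_filter, Set.mem_ofPred_eq] at hb hb'
  refine disjoint_left.mpr fun j hj hj' => ?_
  exact disjoint_left.mp (hdisj b hb.1 b' hb'.1 hne) (mk_mem_product hb.2 hj)
    (mk_mem_product hb'.2 hj')

lemma sum_sum_filter_mem_fst [Fintype ι] {M : Type*} [AddCommMonoid M]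
    (f : ι → Finset ι × Finset κ → M) :
    ∑ i, ∑ b ∈ P.filter (fun b => i ∈ b.1), f i b = ∑ b ∈ P, ∑ i ∈ b.1, f i b :=
  sum_comm' fun i b => by simp [and_comm]

variable {R : Type*} [CommRing R] [DecidableEq κ] [Fintype κ] (W : Matrix ι κ R) (x : κ → R)

lemma mulVec_apply_eq_sum_blocks
    (hdisj : ∀ b ∈ P, ∀ b' ∈ P, b ≠ b' → Disjoint (b.1 ×ˢ b.2) (b'.1 ×ˢ b'.2))
    (hzero : ∀ i j, (∀ b ∈ P, ¬(i ∈ b.1 ∧ j ∈ b.2)) → W i j = 0) (i : ι) :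
    W.mulVec x i = ∑ b ∈ P.filter (fun b => i ∈ b.1), ∑ j ∈ b.2, W i j * x j := by
  rw [← sum_biUnion (pairwiseDisjoint_snd_filter_mem_fst hdisj i), Matrix.mulVec, dotProduct]
  refine (sum_subset (subset_univ _) fun j _ hj => ?_).symm
  have hWij : W i j = 0 := hzero i j fun b hb hij =>
    hj (mem_biUnion.mpr ⟨b, mem_filter.mpr ⟨hb, hij.1⟩, hij.2⟩)
  rw [hWij, zero_mul]

lemma sq_mulVec_apply_le_mul_sum_blocks [LinearOrder R] [IsStrictOrderedRing R] {c : ℕ}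
    (hdisj : ∀ b ∈ P, ∀ b' ∈ P, b ≠ b' → Disjoint (b.1 ×ˢ b.2) (b'.1 ×ˢ b'.2))
    (hrows : ∀ b ∈ P, ∀ b' ∈ P, b.1 = b'.1 ∨ Disjoint b.1 b'.1)
    (hsparse : ∀ t : Finset ι, #(P.filter (fun b => b.1 = t)) ≤ c)
    (hzero : ∀ i j, (∀ b ∈ P, ¬(i ∈ b.1 ∧ j ∈ b.2)) → W i j = 0) (i : ι) :
    W.mulVec x i ^ 2 ≤ c * ∑ b ∈ P.filter (fun b => i ∈ b.1), (∑ j ∈ b.2, W i j * x j) ^ 2 := by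
  rw [mulVec_apply_eq_sum_blocks W x hdisj hzero]
  refine sq_sum_le_card_mul_sum_sq.trans ?_
  gcongr
  exact_mod_cast card_filter_mem_fst_le hrows hsparse i

end BlockPartition

lemma enorm'_sq {N : ℕ} (v : Fin N → ℝ) : enorm' v ^ 2 = ∑ i, v i ^ 2 :=
  Real.sq_sqrt (by positivity)

theorem single_level_block_bound_general
    (N csp : ℕ)
    (W : Matrix (Fin N) (Fin N) ℝ)
    (P : Finset (Finset (Fin N) × Finset (Fin N)))
    (hdisj : ∀ b ∈ P, ∀ b' ∈ P, b ≠ b' → Disjoint (b.1 ×ˢ b.2) (b'.1 ×ˢ b'.2))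
    (hrows : ∀ b ∈ P, ∀ b' ∈ P, b.1 = b'.1 ∨ Disjoint b.1 b'.1)
    (hsparse : ∀ t : Finset (Fin N), (P.filter (fun b => b.1 = t)).card ≤ csp)
    (hzero : ∀ i j, (∀ b ∈ P, ¬(i ∈ b.1 ∧ j ∈ b.2)) → W i j = 0) :
    ∀ x : Fin N → ℝ,
      enorm' (W.mulVec x) ^ 2 ≤ (csp : ℝ) * ∑ b ∈ P, blockNormSq W b.1 b.2 x := by
  intro x
  calc enorm' (W.mulVec x) ^ 2 = ∑ i, W.mulVec x i ^ 2 := enorm'_sq _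
    _ ≤ ∑ i, (csp : ℝ) * ∑ b ∈ P.filter (fun b => i ∈ b.1), (∑ j ∈ b.2, W i j * x j) ^ 2 :=
      sum_le_sum fun i _ => sq_mulVec_apply_le_mul_sum_blocks W x hdisj hrows hsparse hzero i
    _ = (csp : ℝ) * ∑ b ∈ P, blockNormSq W b.1 b.2 x := by
      rw [← mul_sum, sum_sum_filter_mem_fst]
      rfl

/-- Single-level case used in the proof of the reliability lemma: a Cartesian product
block matrix `W` supported on a block partition `P` with row-cluster sparsity constant
`c_sp` satisfies `‖Wx‖₂² ≤ c_sp · Σ_{(t,s)∈P} ‖W_{ts} x_s‖₂²`. -/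
theorem single_level_block_bound
    (N csp : ℕ) (hN : 0 < N) (hcsp : 0 < csp)
    (W : Matrix (Fin N) (Fin N) ℝ)
    (P : Finset (Finset (Fin N) × Finset (Fin N)))
    (hdisj : ∀ b ∈ P, ∀ b' ∈ P, b ≠ b' → Disjoint (b.1 ×ˢ b.2) (b'.1 ×ˢ b'.2))
    (hrows : ∀ b ∈ P, ∀ b' ∈ P, b.1 = b'.1 ∨ Disjoint b.1 b'.1)
    (hsparse : ∀ t : Finset (Fin N), (P.filter (fun b => b.1 = t)).card ≤ csp)
    (hzero : ∀ i j, (∀ b ∈ P, ¬(i ∈ b.1 ∧ j ∈ b.2)) → W i j = 0) :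
    ∀ x : Fin N → ℝ,
      enorm' (W.mulVec x) ^ 2 ≤ (csp : ℝ) * ∑ b ∈ P, blockNormSq W b.1 b.2 x :=
  single_level_block_bound_general N csp W P hdisj hrows hsparse hzero
end

section
/- Let N, L, c_sp be positive integers, let A, A_k, Â_k ∈ ℝ^{N×N}, b, x_k ∈ ℝ^N, and set W_k := A_k − Â_k. Let P be an L-level sparse block collection with sparsity constant c_sp such that (W_k)_{ij} = 0 whenever (i,j) is not contained in t×s for any (t,s) ∈ P, and define the error estimator η_k by η_k² := Σ_{(t,s)∈P} ‖(W_k)_{ts} (x_k)_s‖₂². Assume the saturation condition ‖Â_k x_k − A x_k‖₂ ≤ c_sat ‖A_k x_k − A x_k‖₂ with 0 < c_sat < 1, and assume ‖b − A_k x_k‖₂ ≤ α ‖W_k x_k‖₂ for some α ≥ 0. Then the estimator is reliable: ‖b − A x_k‖₂ ≤ √(c_sp · L) · (1 + α(1 + c_sat))/(1 − c_sat) · η_k. -/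
/-!
Within a row `i`, the blocks whose row cluster contains `i` have disjoint column clusters,
so `(W_k x_k)_i` splits into one partial sum per such block; on each level at most `c_sp` of them
exist, since same-level row clusters through `i` coincide. Cauchy–Schwarz row by row then gives
`‖W_k x_k‖ ≤ √(c_sp L) η_k`. Saturation yields `(1 − c_sat) ‖A_k x_k − A x_k‖ ≤ ‖W_k x_k‖`, and
the triangle inequality through `A_k x_k` bounds the error by a multiple of `‖W_k x_k‖`.
-/

open Finset

/-- The Euclidean norm on `ℝ^N`. -/
noncomputable def euclidNorm {N : ℕ} (v : Fin N → ℝ) : ℝ :=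
  Real.sqrt (∑ i, v i ^ 2)

/-- An `L`-level sparse block collection with sparsity constant `c_sp`: a finite set `P`
of blocks `(t,s)`, `t,s ⊆ {1,…,N}`, with a level function `lvl : P → {1,…,L}` such that
the product index sets are pairwise disjoint, row (resp. column) clusters of blocks of
the same level are equal or disjoint, and on each level at most `c_sp` blocks share a
given row (resp. column) cluster. -/
structure SparseBlockCollection (N L csp : ℕ) where
  P : Finset (Finset (Fin N) × Finset (Fin N))
  lvl : Finset (Fin N) × Finset (Fin N) → ℕ
  lvl_range : ∀ b ∈ P, 1 ≤ lvl b ∧ lvl b ≤ L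
  prod_disjoint : ∀ b ∈ P, ∀ b' ∈ P, b ≠ b' → Disjoint (b.1 ×ˢ b.2) (b'.1 ×ˢ b'.2)
  rows_eq_or_disjoint : ∀ b ∈ P, ∀ b' ∈ P, lvl b = lvl b' → b.1 = b'.1 ∨ Disjoint b.1 b'.1
  cols_eq_or_disjoint : ∀ b ∈ P, ∀ b' ∈ P, lvl b = lvl b' → b.2 = b'.2 ∨ Disjoint b.2 b'.2
  row_sparsity : ∀ ℓ : ℕ, ∀ t : Finset (Fin N),
    (P.filter (fun b => lvl b = ℓ ∧ b.1 = t)).card ≤ csp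
  col_sparsity : ∀ ℓ : ℕ, ∀ s : Finset (Fin N),
    (P.filter (fun b => lvl b = ℓ ∧ b.2 = s)).card ≤ csp

lemma euclidNorm_eq_norm_toLp {N : ℕ} (v : Fin N → ℝ) : euclidNorm v = ‖WithLp.toLp 2 v‖ := by
  simp [EuclideanSpace.norm_eq, euclidNorm, sq_abs]

lemma euclidNorm_sq {N : ℕ} (v : Fin N → ℝ) : euclidNorm v ^ 2 = ∑ i, v i ^ 2 :=
  Real.sq_sqrt (by positivity)

section Saturation

variable {E : Type*} [SeminormedAddCommGroup E] {r d dh : E} {c α : ℝ}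

lemma one_sub_mul_norm_le_of_saturation (hsat : ‖dh‖ ≤ c * ‖d‖) :
    (1 - c) * ‖d‖ ≤ ‖d - dh‖ := by
  have := norm_sub_norm_le d dh
  linarith

lemma norm_add_le_of_saturation (hc0 : 0 ≤ c) (hc1 : c < 1) (hα : 0 ≤ α)
    (hsat : ‖dh‖ ≤ c * ‖d‖) (hres : ‖r‖ ≤ α * ‖d - dh‖) :
    ‖r + d‖ ≤ (1 + α * (1 + c)) / (1 - c) * ‖d - dh‖ := by
  have hd := one_sub_mul_norm_le_of_saturation hsat
  rw [div_mul_eq_mul_div, le_div_iff₀ (by linarith)]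
  nlinarith [norm_add_le r d, norm_nonneg (d - dh),
    mul_nonneg (mul_nonneg hα hc0) (norm_nonneg (d - dh))]

end Saturation

section Blocks

variable {N : ℕ} {P : Finset (Finset (Fin N) × Finset (Fin N))} {M : Matrix (Fin N) (Fin N) ℝ}

lemma mulVec_apply_eq_sum_blocks_s3
    (hP : ∀ p ∈ P, ∀ q ∈ P, p ≠ q → Disjoint (p.1 ×ˢ p.2) (q.1 ×ˢ q.2))
    (hM : ∀ i j, (∀ p ∈ P, ¬(i ∈ p.1 ∧ j ∈ p.2)) → M i j = 0) (x : Fin N → ℝ) (i : Fin N) :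
    M.mulVec x i = ∑ p ∈ P with i ∈ p.1, ∑ j ∈ p.2, M i j * x j := by
  have hcols : ∀ p ∈ {p ∈ P | i ∈ p.1}, ∀ q ∈ {p ∈ P | i ∈ p.1}, p ≠ q → Disjoint p.2 q.2 := by
    intro p hp q hq hpq
    rw [mem_filter] at hp hq
    exact disjoint_left.mpr fun j hjp hjq =>
      disjoint_left.mp (hP p hp.1 q hq.1 hpq) (mk_mem_product hp.2 hjp) (mk_mem_product hq.2 hjq)
  rw [← sum_biUnion hcols, Matrix.mulVec, dotProduct]
  refine (sum_subset (subset_univ _) fun j _ hj => ?_).symm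
  rw [hM i j fun p hp hij => hj (mem_biUnion.mpr ⟨p, mem_filter.mpr ⟨hp, hij.1⟩, hij.2⟩), zero_mul]

lemma sum_blockNormSq_eq_sum_rows (M : Matrix (Fin N) (Fin N) ℝ) (x : Fin N → ℝ) :
    ∑ p ∈ P, blockNormSq M p.1 p.2 x = ∑ i, ∑ p ∈ P with i ∈ p.1, (∑ j ∈ p.2, M i j * x j) ^ 2 := by
  simp only [blockNormSq, sum_filter]
  rw [sum_comm]
  refine sum_congr rfl fun p _ => ?_
  rw [sum_ite_mem, univ_inter]

lemma euclidNorm_mulVec_sq_le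
    (hP : ∀ p ∈ P, ∀ q ∈ P, p ≠ q → Disjoint (p.1 ×ˢ p.2) (q.1 ×ˢ q.2))
    (hM : ∀ i j, (∀ p ∈ P, ¬(i ∈ p.1 ∧ j ∈ p.2)) → M i j = 0)
    {K : ℝ} (hK : ∀ i, (#{p ∈ P | i ∈ p.1} : ℝ) ≤ K) (x : Fin N → ℝ) :
    euclidNorm (M.mulVec x) ^ 2 ≤ K * ∑ p ∈ P, blockNormSq M p.1 p.2 x := by
  rw [euclidNorm_sq, sum_blockNormSq_eq_sum_rows, mul_sum]
  refine sum_le_sum fun i _ => ?_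
  rw [mulVec_apply_eq_sum_blocks_s3 hP hM]
  exact sq_sum_le_card_mul_sum_sq.trans
    (mul_le_mul_of_nonneg_right (hK i) (sum_nonneg fun _ _ => sq_nonneg _))

end Blocks

namespace SparseBlockCollection

variable {N L csp : ℕ} (C : SparseBlockCollection N L csp)

lemma card_filter_mem_fst_lvl_le (i : Fin N) (ℓ : ℕ) :
    #{p ∈ C.P | i ∈ p.1 ∧ C.lvl p = ℓ} ≤ csp := by
  obtain he | ⟨p₀, hp₀⟩ := eq_empty_or_nonempty {p ∈ C.P | i ∈ p.1 ∧ C.lvl p = ℓ}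
  · simp [he]
  rw [mem_filter] at hp₀
  refine (card_le_card fun p hp => ?_).trans (C.row_sparsity ℓ p₀.1)
  rw [mem_filter] at hp ⊢
  refine ⟨hp.1, hp.2.2, ?_⟩
  obtain h | h := C.rows_eq_or_disjoint p hp.1 p₀ hp₀.1 (hp.2.2.trans hp₀.2.2.symm)
  · exact h
  · exact absurd hp₀.2.1 (disjoint_left.mp h hp.2.1)

lemma card_filter_mem_fst_le (i : Fin N) : #{p ∈ C.P | i ∈ p.1} ≤ csp * L := by
  rw [card_eq_sum_card_fiberwise fun p hp => mem_Icc.mpr (C.lvl_range p (mem_filter.mp hp).1)]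
  calc ∑ ℓ ∈ Icc 1 L, #{p ∈ {p ∈ C.P | i ∈ p.1} | C.lvl p = ℓ}
      ≤ ∑ _ℓ ∈ Icc 1 L, csp := sum_le_sum fun ℓ _ => by
        rw [filter_filter]; exact C.card_filter_mem_fst_lvl_le i ℓ
    _ = csp * L := by simp [mul_comm]

theorem euclidNorm_mulVec_le {M : Matrix (Fin N) (Fin N) ℝ}
    (hM : ∀ i j, (∀ p ∈ C.P, ¬(i ∈ p.1 ∧ j ∈ p.2)) → M i j = 0) (x : Fin N → ℝ) :
    euclidNorm (M.mulVec x) ≤ √(csp * L) * √(∑ p ∈ C.P, blockNormSq M p.1 p.2 x) := by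
  rw [← Real.sqrt_mul (by positivity)]
  exact Real.le_sqrt_of_sq_le <| euclidNorm_mulVec_sq_le C.prod_disjoint hM
    (fun i => by exact_mod_cast C.card_filter_mem_fst_le i) x

end SparseBlockCollection

theorem estimator_reliability_general
    (N L csp : ℕ)
    (A Ak Ahk : Matrix (Fin N) (Fin N) ℝ) (b xk : Fin N → ℝ)
    (Wk : Matrix (Fin N) (Fin N) ℝ) (hW : Wk = Ak - Ahk)
    (C : SparseBlockCollection N L csp)
    (hzero : ∀ i j, (∀ p ∈ C.P, ¬(i ∈ p.1 ∧ j ∈ p.2)) → Wk i j = 0)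
    (ηk : ℝ) (hηk0 : 0 ≤ ηk)
    (hηk : ηk ^ 2 = ∑ p ∈ C.P, blockNormSq Wk p.1 p.2 xk)
    (csat α : ℝ) (hc0 : 0 < csat) (hc1 : csat < 1) (hα : 0 ≤ α)
    (hsat : euclidNorm (Ahk.mulVec xk - A.mulVec xk) ≤ csat * euclidNorm (Ak.mulVec xk - A.mulVec xk))
    (hres : euclidNorm (b - Ak.mulVec xk) ≤ α * euclidNorm (Wk.mulVec xk)) :
    euclidNorm (b - A.mulVec xk) ≤
      Real.sqrt ((csp : ℝ) * (L : ℝ)) * ((1 + α * (1 + csat)) / (1 - csat)) * ηk := by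
  have hest : euclidNorm (Wk.mulVec xk) ≤ √(csp * L) * ηk := by
    simpa only [← hηk, Real.sqrt_sq hηk0] using C.euclidNorm_mulVec_le hzero xk
  have hWx : Wk.mulVec xk = (Ak.mulVec xk - A.mulVec xk) - (Ahk.mulVec xk - A.mulVec xk) := by
    rw [hW, Matrix.sub_mulVec, sub_sub_sub_cancel_right]
  have herr : b - A.mulVec xk = (b - Ak.mulVec xk) + (Ak.mulVec xk - A.mulVec xk) :=
    (sub_add_sub_cancel _ _ _).symm
  rw [hWx] at hres hest
  simp only [herr, euclidNorm_eq_norm_toLp, WithLp.toLp_add, WithLp.toLp_sub] at hsat hres hest ⊢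
  calc _ ≤ (1 + α * (1 + csat)) / (1 - csat) * ‖_‖ :=
        norm_add_le_of_saturation hc0.le hc1 hα hsat hres
    _ ≤ (1 + α * (1 + csat)) / (1 - csat) * (√(csp * L) * ηk) :=
        mul_le_mul_of_nonneg_left hest (div_nonneg (by positivity) (by linarith))
    _ = _ := by ring

/-- Lemma 1 (reliability): if `W_k = A_k − Â_k` vanishes outside the blocks of an
`L`-level sparse block collection with sparsity constant `c_sp`, the saturation
condition holds with `0 < c_sat < 1`, and `‖b − A_k x_k‖₂ ≤ α ‖W_k x_k‖₂` with `α ≥ 0`,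
then `‖b − A x_k‖₂ ≤ √(c_sp·L) · (1 + α(1 + c_sat))/(1 − c_sat) · η_k`, where
`η_k² = Σ_{(t,s)∈P} ‖(W_k)_{ts}(x_k)_s‖₂²`. -/
theorem estimator_reliability
    (N L csp : ℕ) (hN : 0 < N) (hL : 0 < L) (hcsp : 0 < csp)
    (A Ak Ahk : Matrix (Fin N) (Fin N) ℝ) (b xk : Fin N → ℝ)
    (Wk : Matrix (Fin N) (Fin N) ℝ) (hW : Wk = Ak - Ahk)
    (C : SparseBlockCollection N L csp)
    (hzero : ∀ i j, (∀ p ∈ C.P, ¬(i ∈ p.1 ∧ j ∈ p.2)) → Wk i j = 0)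
    (ηk : ℝ) (hηk0 : 0 ≤ ηk)
    (hηk : ηk ^ 2 = ∑ p ∈ C.P, blockNormSq Wk p.1 p.2 xk)
    (csat α : ℝ) (hc0 : 0 < csat) (hc1 : csat < 1) (hα : 0 ≤ α)
    (hsat : euclidNorm (Ahk.mulVec xk - A.mulVec xk) ≤ csat * euclidNorm (Ak.mulVec xk - A.mulVec xk))
    (hres : euclidNorm (b - Ak.mulVec xk) ≤ α * euclidNorm (Wk.mulVec xk)) :
    euclidNorm (b - A.mulVec xk) ≤
      Real.sqrt ((csp : ℝ) * (L : ℝ)) * ((1 + α * (1 + csat)) / (1 - csat)) * ηk :=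
  estimator_reliability_general N L csp A Ak Ahk b xk Wk hW C hzero ηk hηk0 hηk csat α hc0 hc1 hα
    hsat hres
end

section
/- Let N be a positive integer, let A, A_k, Â_k ∈ ℝ^{N×N}, b, x_k ∈ ℝ^N, and set W_k := A_k − Â_k. Assume the saturation condition ‖Â_k x_k − A x_k‖₂ ≤ c_sat ‖A_k x_k − A x_k‖₂ with 0 < c_sat < 1, and assume ‖b − A_k x_k‖₂ ≤ α ‖W_k x_k‖₂ for some constant α with 0 ≤ α ≤ 1/2. Then ‖b − A x_k‖₂ ≥ (1 − α(1 + c_sat))/(1 + c_sat) · ‖W_k x_k‖₂. -/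
/-!
With `u = A_k x`, `v = Â_k x`, `w = A x` we have `W_k x = u - v`. Saturation and the triangle
inequality give `‖u - v‖ ≤ (1 + c) ‖u - w‖`, and `‖u - w‖ ≤ ‖b - w‖ + ‖b - u‖ ≤ ‖b - w‖ + α ‖u - v‖`;
eliminating `‖u - w‖` yields the bound. Only the triangle inequality is involved, so the estimate
holds in any seminormed group.
-/

noncomputable def euclidNormFin {N : ℕ} (v : Fin N → ℝ) : ℝ :=
  Real.sqrt (∑ i, v i ^ 2)

theorem euclidNormFin_eq_norm {N : ℕ} (v : Fin N → ℝ) :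
    euclidNormFin v = ‖WithLp.toLp 2 v‖ := by
  simp only [euclidNormFin, EuclideanSpace.norm_eq, Real.norm_eq_abs, sq_abs]

section Saturation

variable {E : Type*} [SeminormedAddCommGroup E]

theorem norm_sub_le_one_add_mul_of_saturation {u v w : E} {c : ℝ}
    (hsat : ‖v - w‖ ≤ c * ‖u - w‖) : ‖u - v‖ ≤ (1 + c) * ‖u - w‖ :=
  calc ‖u - v‖ ≤ ‖u - w‖ + ‖w - v‖ := norm_sub_le_norm_sub_add_norm_sub u w v
    _ = ‖u - w‖ + ‖v - w‖ := by rw [norm_sub_rev w v]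
    _ ≤ (1 + c) * ‖u - w‖ := by linarith

theorem mul_norm_sub_le_of_saturation {b u v w : E} {c α : ℝ} (hc : 0 < 1 + c)
    (hsat : ‖v - w‖ ≤ c * ‖u - w‖) (hres : ‖b - u‖ ≤ α * ‖u - v‖) :
    (1 - α * (1 + c)) / (1 + c) * ‖u - v‖ ≤ ‖b - w‖ := by
  have hmodel : ‖u - v‖ ≤ (1 + c) * ‖u - w‖ := norm_sub_le_one_add_mul_of_saturation hsat
  have hsplit : ‖u - w‖ ≤ ‖b - w‖ + α * ‖u - v‖ :=
    calc ‖u - w‖ ≤ ‖u - b‖ + ‖b - w‖ := norm_sub_le_norm_sub_add_norm_sub u b w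
      _ = ‖b - u‖ + ‖b - w‖ := by rw [norm_sub_rev u b]
      _ ≤ ‖b - w‖ + α * ‖u - v‖ := by linarith
  have hscaled := mul_le_mul_of_nonneg_left hsplit hc.le
  rw [div_mul_eq_mul_div, div_le_iff₀ hc]
  linarith

end Saturation

theorem efficiency_lower_bound_general
    (N : ℕ)
    (A Ak Ahk : Matrix (Fin N) (Fin N) ℝ) (b xk : Fin N → ℝ)
    (Wk : Matrix (Fin N) (Fin N) ℝ) (hW : Wk = Ak - Ahk)
    (csat α : ℝ) (hc0 : 0 < csat)
    (hsat : euclidNormFin (Ahk.mulVec xk - A.mulVec xk) ≤ csat * euclidNormFin (Ak.mulVec xk - A.mulVec xk))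
    (hres : euclidNormFin (b - Ak.mulVec xk) ≤ α * euclidNormFin (Wk.mulVec xk)) :
    (1 - α * (1 + csat)) / (1 + csat) * euclidNormFin (Wk.mulVec xk) ≤
      euclidNormFin (b - A.mulVec xk) := by
  subst hW
  simp only [euclidNormFin_eq_norm, Matrix.sub_mulVec, WithLp.toLp_sub] at hsat hres ⊢
  exact mul_norm_sub_le_of_saturation (by linarith) hsat hres

/-- Lemma 2 (efficiency-type estimate): under the saturation condition and the assumption
`‖b − A_k x_k‖₂ ≤ α ‖W_k x_k‖₂` with `0 ≤ α ≤ 1/2`, the computable quantity `‖W_k x_k‖₂`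
is, up to constants, a lower bound for the residual `‖b − A x_k‖₂`. -/
theorem efficiency_lower_bound
    (N : ℕ) (hN : 0 < N)
    (A Ak Ahk : Matrix (Fin N) (Fin N) ℝ) (b xk : Fin N → ℝ)
    (Wk : Matrix (Fin N) (Fin N) ℝ) (hW : Wk = Ak - Ahk)
    (csat α : ℝ) (hc0 : 0 < csat) (hc1 : csat < 1)
    (hα0 : 0 ≤ α) (hα1 : α ≤ 1 / 2)
    (hsat : euclidNormFin (Ahk.mulVec xk - A.mulVec xk) ≤ csat * euclidNormFin (Ak.mulVec xk - A.mulVec xk))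
    (hres : euclidNormFin (b - Ak.mulVec xk) ≤ α * euclidNormFin (Wk.mulVec xk)) :
    (1 - α * (1 + csat)) / (1 + csat) * euclidNormFin (Wk.mulVec xk) ≤
      euclidNormFin (b - A.mulVec xk) :=
  efficiency_lower_bound_general N A Ak Ahk b xk Wk hW csat α hc0 hsat hres
end

section
/- Let N be a positive integer, let P be a finite set of blocks (t,s) with t, s ⊆ {1,…,N}, let M ⊆ P, and let A_k, Â_k, Â_{k+1} ∈ ℝ^{N×N} with W_k := A_k − Â_k. Let x_k, x_{k+1} ∈ ℝ^N, let 0 < θ < 1, set ε := θ²/(2(1−θ²)), and define η_k² := Σ_{(t,s)∈P} ‖(W_k)_{ts} (x_k)_s‖₂², η_{k+1}² := Σ_{(t,s)∈M} ‖(Â_k − Â_{k+1})_{ts} (x_{k+1})_s‖₂² + Σ_{(t,s)∈P∖M} ‖(W_k)_{ts} (x_{k+1})_s‖₂², and z_k := Σ_{(t,s)∈M} ‖(Â_k − Â_{k+1})_{ts} (x_{k+1})_s‖₂² + (1 + 1/ε)·Σ_{(t,s)∈P∖M} ‖(W_k)_{ts} (x_{k+1} − x_k)_s‖₂². Assume the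 Dörfler marking condition Σ_{(t,s)∈M} ‖(W_k)_{ts} (x_k)_s‖₂² ≥ θ²·η_k². Then η_{k+1}² ≤ (1 − θ²/2)·η_k² + z_k. -/
/-! The reduction factor comes from splitting `η_{k+1}²` over marked and unmarked blocks: on the
unmarked blocks, Young's inequality `(a + b)² ≤ (1 + ε) a² + (1 + 1/ε) b²` compares `x_{k+1}` with
`x_k`, and Dörfler marking bounds the unmarked part of `η_k²` by `(1 - θ²) η_k²`. The choice
`ε = θ²/(2(1 - θ²))` is exactly the one making `(1 + ε)(1 - θ²) = 1 - θ²/2`. -/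

open Finset

theorem add_sq_le_one_add_mul_sq_add {a b ε : ℝ} (hε : 0 < ε) :
    (a + b) ^ 2 ≤ (1 + ε) * a ^ 2 + (1 + 1 / ε) * b ^ 2 := by
  have := two_mul_le_add_mul_sq (a := a) (b := b) hε
  rw [one_div]
  linarith [add_sq a b]

theorem blockNormSq_add_le {N : ℕ} (M : Matrix (Fin N) (Fin N) ℝ) (t s : Finset (Fin N))
    (x d : Fin N → ℝ) {ε : ℝ} (hε : 0 < ε) :
    blockNormSq M t s (x + d) ≤
      (1 + ε) * blockNormSq M t s x + (1 + 1 / ε) * blockNormSq M t s d := by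
  simp only [blockNormSq, mul_sum, ← sum_add_distrib]
  refine sum_le_sum fun i _ => ?_
  simpa only [Pi.add_apply, mul_add, sum_add_distrib] using add_sq_le_one_add_mul_sq_add hε

theorem sum_blockNormSq_add_le {N : ℕ} (M : Matrix (Fin N) (Fin N) ℝ)
    (B : Finset (Finset (Fin N) × Finset (Fin N))) (x d : Fin N → ℝ) {ε : ℝ} (hε : 0 < ε) :
    ∑ b ∈ B, blockNormSq M b.1 b.2 (x + d) ≤
      (1 + ε) * ∑ b ∈ B, blockNormSq M b.1 b.2 x
        + (1 + 1 / ε) * ∑ b ∈ B, blockNormSq M b.1 b.2 d := by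
  rw [mul_sum, mul_sum, ← sum_add_distrib]
  exact sum_le_sum fun b _ => blockNormSq_add_le M b.1 b.2 x d hε

theorem sum_sdiff_le_of_dorfler {ι : Type*} [DecidableEq ι] {P M : Finset ι} (hMP : M ⊆ P)
    (f : ι → ℝ) {c : ℝ} (hmark : c * ∑ i ∈ P, f i ≤ ∑ i ∈ M, f i) :
    ∑ i ∈ P \ M, f i ≤ (1 - c) * ∑ i ∈ P, f i := by
  rw [← sum_sdiff hMP] at hmark ⊢
  linarith

theorem one_add_young_param_mul {θ : ℝ} (hθ : 1 - θ ^ 2 ≠ 0) :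
    (1 + θ ^ 2 / (2 * (1 - θ ^ 2))) * (1 - θ ^ 2) = 1 - θ ^ 2 / 2 := by
  field_simp
  ring

theorem estimator_reduction_step_general
    (N : ℕ)
    (P M : Finset (Finset (Fin N) × Finset (Fin N))) (hMP : M ⊆ P)
    (Ahk Ahk1 : Matrix (Fin N) (Fin N) ℝ)
    (Wk : Matrix (Fin N) (Fin N) ℝ)
    (xk xk1 : Fin N → ℝ)
    (θ : ℝ) (hθ0 : 0 < θ) (hθ1 : θ < 1)
    (ε : ℝ) (hε : ε = θ ^ 2 / (2 * (1 - θ ^ 2)))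
    (ηkSq ηk1Sq zk : ℝ)
    (hηk : ηkSq = ∑ b ∈ P, blockNormSq Wk b.1 b.2 xk)
    (hηk1 : ηk1Sq = ∑ b ∈ M, blockNormSq (Ahk - Ahk1) b.1 b.2 xk1
        + ∑ b ∈ P \ M, blockNormSq Wk b.1 b.2 xk1)
    (hzk : zk = ∑ b ∈ M, blockNormSq (Ahk - Ahk1) b.1 b.2 xk1
        + (1 + 1 / ε) * ∑ b ∈ P \ M, blockNormSq Wk b.1 b.2 (xk1 - xk))
    (hmark : θ ^ 2 * ηkSq ≤ ∑ b ∈ M, blockNormSq Wk b.1 b.2 xk) :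
    ηk1Sq ≤ (1 - θ ^ 2 / 2) * ηkSq + zk := by
  have hθsq : 0 < 1 - θ ^ 2 := by nlinarith
  have hε0 : 0 < ε := hε ▸ by positivity
  have hyoung := sum_blockNormSq_add_le Wk (P \ M) xk (xk1 - xk) hε0
  rw [add_sub_cancel] at hyoung
  have hunmarked : ∑ b ∈ P \ M, blockNormSq Wk b.1 b.2 xk ≤ (1 - θ ^ 2) * ηkSq :=
    hηk ▸ sum_sdiff_le_of_dorfler hMP _ (hηk ▸ hmark)
  have hcoef : (1 + ε) * (1 - θ ^ 2) = 1 - θ ^ 2 / 2 := hε ▸ one_add_young_param_mul hθsq.ne'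
  calc ηk1Sq ≤ ∑ b ∈ M, blockNormSq (Ahk - Ahk1) b.1 b.2 xk1
        + (1 + ε) * ((1 - θ ^ 2) * ηkSq)
        + (1 + 1 / ε) * ∑ b ∈ P \ M, blockNormSq Wk b.1 b.2 (xk1 - xk) := by
          rw [hηk1]
          linarith [mul_le_mul_of_nonneg_left hunmarked (by linarith : (0 : ℝ) ≤ 1 + ε)]
    _ = (1 - θ ^ 2 / 2) * ηkSq + zk := by rw [hzk, ← hcoef]; ring

/-- Estimator reduction step via Young's inequality with `ε = θ²/(2(1−θ²))`: under the
Dörfler marking condition `Σ_{(t,s)∈M} ‖(W_k)_{ts}(x_k)_s‖₂² ≥ θ²·η_k²` one has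
`η_{k+1}² ≤ (1 − θ²/2)·η_k² + z_k`. -/
theorem estimator_reduction_step
    (N : ℕ) (hN : 0 < N)
    (P M : Finset (Finset (Fin N) × Finset (Fin N))) (hMP : M ⊆ P)
    (Ak Ahk Ahk1 : Matrix (Fin N) (Fin N) ℝ)
    (Wk : Matrix (Fin N) (Fin N) ℝ) (hW : Wk = Ak - Ahk)
    (xk xk1 : Fin N → ℝ)
    (θ : ℝ) (hθ0 : 0 < θ) (hθ1 : θ < 1)
    (ε : ℝ) (hε : ε = θ ^ 2 / (2 * (1 - θ ^ 2)))
    (ηkSq ηk1Sq zk : ℝ)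
    (hηk : ηkSq = ∑ b ∈ P, blockNormSq Wk b.1 b.2 xk)
    (hηk1 : ηk1Sq = ∑ b ∈ M, blockNormSq (Ahk - Ahk1) b.1 b.2 xk1
        + ∑ b ∈ P \ M, blockNormSq Wk b.1 b.2 xk1)
    (hzk : zk = ∑ b ∈ M, blockNormSq (Ahk - Ahk1) b.1 b.2 xk1
        + (1 + 1 / ε) * ∑ b ∈ P \ M, blockNormSq Wk b.1 b.2 (xk1 - xk))
    (hmark : θ ^ 2 * ηkSq ≤ ∑ b ∈ M, blockNormSq Wk b.1 b.2 xk) :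
    ηk1Sq ≤ (1 - θ ^ 2 / 2) * ηkSq + zk :=
  estimator_reduction_step_general N P M hMP Ahk Ahk1 Wk xk xk1 θ hθ0 hθ1 ε hε ηkSq ηk1Sq zk hηk
    hηk1 hzk hmark
end

section
/- Let N, L, c_sp be positive integers and let P be an L-level sparse block collection with sparsity constant c_sp. Then for every x ∈ ℝ^N it holds that Σ_{(t,s)∈P} ‖x_s‖₂² ≤ c_sp · L · ‖x‖₂², where ‖x_s‖₂² = Σ_{j∈s} x_j². -/
open Finset

/-- The Euclidean norm on `ℝ^N`. -/
noncomputable def enormEuclid {N : ℕ} (v : Fin N → ℝ) : ℝ :=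
  Real.sqrt (∑ i, v i ^ 2)

/-!
Exchanging the order of summation, `Σ_{(t,s)∈P} ‖x_s‖₂² = Σ_j m_j x_j²`, where `m_j` counts
the blocks whose column cluster contains `j`. On a fixed level, two such column clusters
meet in `j`, so they are equal; hence at most `c_sp` of these blocks lie on each level, and
`m_j ≤ c_sp · L`.
-/

theorem Finset.sum_sum_eq_sum_card_nsmul {α ι M : Type*} [Fintype ι] [DecidableEq ι]
    [AddCommMonoid M] (P : Finset α) (g : α → Finset ι) (f : ι → M) :
    ∑ b ∈ P, ∑ i ∈ g b, f i = ∑ i, #{b ∈ P | i ∈ g b} • f i := by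
  rw [Finset.sum_comm' (t' := univ) (s' := fun i ↦ {b ∈ P | i ∈ g b})]
  · simp only [sum_const]
  · simp

namespace SparseBlockCollection

variable {N L csp : ℕ} (C : SparseBlockCollection N L csp)

theorem card_filter_lvl_mem_col_le (ℓ : ℕ) (j : Fin N) :
    #{b ∈ C.P | C.lvl b = ℓ ∧ j ∈ b.2} ≤ csp := by
  rcases Finset.eq_empty_or_nonempty {b ∈ C.P | C.lvl b = ℓ ∧ j ∈ b.2} with hempty | ⟨b₀, hb₀⟩
  · simp [hempty]
  obtain ⟨hb₀P, hb₀ℓ, hjb₀⟩ := mem_filter.mp hb₀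
  refine (card_le_card fun b hb ↦ ?_).trans (C.col_sparsity ℓ b₀.2)
  obtain ⟨hbP, hbℓ, hjb⟩ := mem_filter.mp hb
  have hcol : b.2 = b₀.2 :=
    (C.cols_eq_or_disjoint b hbP b₀ hb₀P (hbℓ.trans hb₀ℓ.symm)).resolve_right
      fun hdisj ↦ disjoint_left.mp hdisj hjb hjb₀
  exact mem_filter.mpr ⟨hbP, hbℓ, hcol⟩

theorem card_filter_mem_col_le (j : Fin N) : #{b ∈ C.P | j ∈ b.2} ≤ csp * L := by
  calc #{b ∈ C.P | j ∈ b.2}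
      = ∑ ℓ ∈ Icc 1 L, #{b ∈ {b ∈ C.P | j ∈ b.2} | C.lvl b = ℓ} :=
        card_eq_sum_card_fiberwise fun b hb ↦ mem_Icc.mpr (C.lvl_range b (mem_filter.mp hb).1)
    _ ≤ ∑ ℓ ∈ Icc 1 L, csp := sum_le_sum fun ℓ _ ↦ by
        rw [filter_filter, filter_congr fun _ _ ↦ and_comm]
        exact C.card_filter_lvl_mem_col_le ℓ j
    _ = csp * L := by simp [mul_comm]

end SparseBlockCollection

theorem enormEuclid_sq {N : ℕ} (v : Fin N → ℝ) : enormEuclid v ^ 2 = ∑ i, v i ^ 2 :=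
  Real.sq_sqrt (by positivity)

theorem column_counting_bound_general
    (N L csp : ℕ) (C : SparseBlockCollection N L csp) :
    ∀ x : Fin N → ℝ,
      ∑ b ∈ C.P, ∑ j ∈ b.2, x j ^ 2 ≤ (csp : ℝ) * (L : ℝ) * enormEuclid x ^ 2 := by
  intro x
  rw [sum_sum_eq_sum_card_nsmul, enormEuclid_sq, mul_sum]
  refine sum_le_sum fun j _ ↦ ?_
  rw [nsmul_eq_mul]
  gcongr
  exact_mod_cast C.card_filter_mem_col_le j

/-- Counting bound underlying the estimate `z_k ≤ c_sp·L·[…]`: for an `L`-level sparse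
block collection `P` with sparsity constant `c_sp`,
`Σ_{(t,s)∈P} ‖x_s‖₂² ≤ c_sp · L · ‖x‖₂²` for every `x ∈ ℝ^N`. -/
theorem column_counting_bound
    (N L csp : ℕ) (hN : 0 < N) (hL : 0 < L) (hcsp : 0 < csp)
    (C : SparseBlockCollection N L csp) :
    ∀ x : Fin N → ℝ,
      ∑ b ∈ C.P, ∑ j ∈ b.2, x j ^ 2 ≤ (csp : ℝ) * (L : ℝ) * enormEuclid x ^ 2 :=
  column_counting_bound_general N L csp C
end
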